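/- Fix a prime p and identify the dominant weights of SL₃ with pairs (a,b) ∈ ℕ², writing ρ = (1,1). Every λ ∈ ℕ² has a unique expression λ = Σ_{j=0}^{m} a_j p^j with a_j ∈ ℕ², such that for 0 ≤ j ≤ m−1 both coordinates of a_j lie in the interval [p−1, 2p−2] (i.e., a_j ∈ (p−1)ρ + X₁), and at least one coordinate of a_m is strictly less than p−1. -/
import Mathlib


/-!
Dominant weights of `SL₃` are written as pairs `(a, b) : ℕ × ℕ`, meaning
`a·ϖ₁ + b·ϖ₂`; addition and scalar multiplication are componentwise, and
`ρ = (1,1)`.  The condition `a_j ∈ (p-1)ρ + X₁` for a weight `a_j = (x, y)`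
says exactly that `p - 1 ≤ x, y ≤ 2p - 2`.
-/

private def Good (p : ℕ) (lam : ℕ × ℕ) (l : List (ℕ × ℕ)) : Prop :=
  l ≠ [] ∧
  (∀ i : ℕ, i + 1 < l.length →
    (p - 1 ≤ (l.getD i 0).1 ∧ (l.getD i 0).1 ≤ 2 * p - 2) ∧
    (p - 1 ≤ (l.getD i 0).2 ∧ (l.getD i 0).2 ≤ 2 * p - 2)) ∧
  ((l.getLast!).1 < p - 1 ∨ (l.getLast!).2 < p - 1) ∧
  lam = ∑ i ∈ Finset.range l.length, p ^ i • l.getD i 0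

private lemma getLast!_cons_cons (a b : ℕ × ℕ) (t : List (ℕ × ℕ)) :
    (a :: b :: t).getLast! = (b :: t).getLast! := by
  rw [show (a :: b :: t).getLast! = (a :: b :: t).getLast (by simp) from rfl,
      show (b :: t).getLast! = (b :: t).getLast (by simp) from rfl]
  exact List.getLast_cons _

private lemma sum_cons (p : ℕ) (a : ℕ × ℕ) (t : List (ℕ × ℕ)) :
    ∑ i ∈ Finset.range (a :: t).length, p ^ i • (a :: t).getD i 0
      = a + p • ∑ i ∈ Finset.range t.length, p ^ i • t.getD i 0 := by
  rw [List.length_cons, Finset.sum_range_succ', Finset.smul_sum]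
  simp only [List.getD_cons_succ, List.getD_cons_zero, pow_zero, one_smul, pow_succ', mul_smul]
  rw [add_comm]

private lemma digit_eq {p x a s : ℕ} (hp : 2 ≤ p) (ha1 : p - 1 ≤ a) (ha2 : a ≤ 2 * p - 2)
    (h : x = a + p * s) :
    a = p - 1 + (x - (p - 1)) % p ∧ s = (x - (p - 1)) / p := by
  have h1 : x - (p - 1) = (a - (p - 1)) + p * s := by omega
  have h2 : a - (p - 1) < p := by omega
  constructor
  · have h3 : (x - (p - 1)) % p = (a - (p - 1)) % p := by
      rw [h1]; exact Nat.add_mul_mod_self_left _ _ _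
    rw [h3, Nat.mod_eq_of_lt h2]; omega
  · rw [h1, Nat.add_mul_div_left _ _ (by omega : 0 < p), Nat.div_eq_of_lt h2, zero_add]

private lemma good_small (p : ℕ) (hp : 2 ≤ p) (lam : ℕ × ℕ)
    (h : lam.1 < p - 1 ∨ lam.2 < p - 1) : ∃! l, Good p lam l := by
  refine ⟨[lam], ⟨by simp, ?_, ?_, by simp⟩, ?_⟩
  · intro i hi; simp at hi
  · simpa [show ([lam] : List (ℕ × ℕ)).getLast! = lam from rfl] using h
  · rintro l ⟨hne, hdig, hlast, hsum⟩
    cases l with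
    | nil => exact absurd rfl hne
    | cons a t =>
      cases t with
      | nil =>
        have : lam = a := by simpa using hsum
        simp [this]
      | cons b t' =>
        exfalso
        have hd0 := hdig 0 (by simp)
        simp only [List.getD_cons_zero] at hd0
        have hsum2 : lam = a + p • ∑ i ∈ Finset.range (b :: t').length,
            p ^ i • (b :: t').getD i 0 := by rw [hsum, sum_cons]
        have c1 : lam.1 = a.1 + p * (∑ i ∈ Finset.range (b :: t').length,
            p ^ i • (b :: t').getD i 0).1 := by rw [hsum2]; simp [smul_eq_mul]
        have c2 : lam.2 = a.2 + p * (∑ i ∈ Finset.range (b :: t').length,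
            p ^ i • (b :: t').getD i 0).2 := by rw [hsum2]; simp [smul_eq_mul]
        omega

private lemma key (p : ℕ) (hp : 2 ≤ p) :
    ∀ n, ∀ lam : ℕ × ℕ, lam.1 + lam.2 ≤ n → ∃! l, Good p lam l := by
  intro n
  induction n with
  | zero => intro lam h; exact good_small p hp lam (by omega)
  | succ n ih =>
    intro lam hn
    by_cases hsmall : lam.1 < p - 1 ∨ lam.2 < p - 1
    · exact good_small p hp lam hsmall
    · push_neg at hsmall
      obtain ⟨h1, h2⟩ := hsmall
      have hp0 : 0 < p := by omega
      set d : ℕ × ℕ := (p - 1 + (lam.1 - (p - 1)) % p, p - 1 + (lam.2 - (p - 1)) % p) with hd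
      set mu : ℕ × ℕ := ((lam.1 - (p - 1)) / p, (lam.2 - (p - 1)) / p) with hmu
      have hm1 := Nat.div_add_mod (lam.1 - (p - 1)) p
      have hm2 := Nat.div_add_mod (lam.2 - (p - 1)) p
      have hdecomp : lam = d + p • mu := by
        have : (d + p • mu).1 = d.1 + p * mu.1 := by simp [smul_eq_mul]
        have : (d + p • mu).2 = d.2 + p * mu.2 := by simp [smul_eq_mul]
        apply Prod.ext <;> simp [hd, hmu, smul_eq_mul] <;> omega
      have hr1 : (lam.1 - (p - 1)) % p < p := Nat.mod_lt _ hp0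
      have hr2 : (lam.2 - (p - 1)) % p < p := Nat.mod_lt _ hp0
      have hlt1 : mu.1 < lam.1 := by
        have : (lam.1 - (p - 1)) / p ≤ lam.1 - (p - 1) := Nat.div_le_self _ _
        have h' : (lam.1 - (p - 1)) / p < lam.1 - (p - 1) ∨ lam.1 - (p - 1) = 0 := by
          rcases Nat.eq_zero_or_pos (lam.1 - (p - 1)) with h0 | h0
          · exact Or.inr h0
          · exact Or.inl (Nat.div_lt_self h0 (by omega))
        simp only [hmu]; omega
      have hlt2 : mu.2 < lam.2 := by
        have : (lam.2 - (p - 1)) / p ≤ lam.2 - (p - 1) := Nat.div_le_self _ _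
        have h' : (lam.2 - (p - 1)) / p < lam.2 - (p - 1) ∨ lam.2 - (p - 1) = 0 := by
          rcases Nat.eq_zero_or_pos (lam.2 - (p - 1)) with h0 | h0
          · exact Or.inr h0
          · exact Or.inl (Nat.div_lt_self h0 (by omega))
        simp only [hmu]; omega
      obtain ⟨l', hl', huniq⟩ := ih mu (by omega)
      obtain ⟨hne', hdig', hlast', hsum'⟩ := hl'
      refine ⟨d :: l', ⟨by simp, ?_, ?_, ?_⟩, ?_⟩
      · intro i hi
        cases i with
        | zero =>
          simp only [List.getD_cons_zero, hd]
          refine ⟨⟨by omega, by omega⟩, by omega, by omega⟩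
        | succ i =>
          simp only [List.getD_cons_succ]
          exact hdig' i (by simpa using hi)
      · cases l' with
        | nil => exact absurd rfl hne'
        | cons b t' => rw [getLast!_cons_cons]; exact hlast'
      · rw [sum_cons, ← hsum', ← hdecomp]
      · rintro l ⟨hne, hdig, hlast, hsum⟩
        cases l with
        | nil => exact absurd rfl hne
        | cons a t =>
          cases t with
          | nil =>
            exfalso
            have hla : lam = a := by simpa using hsum
            have : ([a] : List (ℕ × ℕ)).getLast! = a := rfl
            rw [this, ← hla] at hlast
            omega
          | cons b t' =>
            have hd0 := hdig 0 (by simp)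
            simp only [List.getD_cons_zero] at hd0
            have hsum2 : lam = a + p • ∑ i ∈ Finset.range (b :: t').length,
                p ^ i • (b :: t').getD i 0 := by rw [hsum, sum_cons]
            set S := ∑ i ∈ Finset.range (b :: t').length, p ^ i • (b :: t').getD i 0 with hS
            have c1 : lam.1 = a.1 + p * S.1 := by rw [hsum2]; simp [smul_eq_mul]
            have c2 : lam.2 = a.2 + p * S.2 := by rw [hsum2]; simp [smul_eq_mul]
            have e1 := digit_eq hp hd0.1.1 hd0.1.2 c1
            have e2 := digit_eq hp hd0.2.1 hd0.2.2 c2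
            have ha : a = d := Prod.ext (by rw [e1.1]) (by rw [e2.1])
            have hSmu : S = mu := Prod.ext (by rw [e1.2]) (by rw [e2.2])
            have hgood : Good p mu (b :: t') := by
              refine ⟨by simp, ?_, ?_, by rw [← hSmu, hS]⟩
              · intro i hi
                have := hdig (i + 1) (by simp at hi ⊢; omega)
                simpa only [List.getD_cons_succ] using this
              · rw [← getLast!_cons_cons a]; exact hlast
            rw [huniq (b :: t') hgood, ha]

/-- Every dominant weight `λ` of `SL₃` has a unique expression
`λ = ∑_{j=0}^{m} a_j p^j` (encoded as a nonempty list `l = [a_0, …, a_m]`)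
such that each `a_j` with `0 ≤ j ≤ m - 1` has both coordinates in
`[p - 1, 2p - 2]` (i.e. `a_j ∈ (p-1)ρ + X₁`), while `a_m` has at least one
coordinate strictly less than `p - 1`. -/
theorem sl3_unique_tilting_padic_expansion (p : ℕ) (hp : p.Prime) (lam : ℕ × ℕ) :
    ∃! l : List (ℕ × ℕ),
      l ≠ [] ∧
      (∀ i : ℕ, i + 1 < l.length →
        (p - 1 ≤ (l.getD i 0).1 ∧ (l.getD i 0).1 ≤ 2 * p - 2) ∧
        (p - 1 ≤ (l.getD i 0).2 ∧ (l.getD i 0).2 ≤ 2 * p - 2)) ∧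
      ((l.getLast!).1 < p - 1 ∨ (l.getLast!).2 < p - 1) ∧
      lam = ∑ i ∈ Finset.range l.length, p ^ i • l.getD i 0 := by
  exact key p hp.two_le (lam.1 + lam.2) lam le_rfl
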